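/- arXiv:1412.7377 — 5 statements merged into one kernel-verified Lean document; each statement's English description precedes it below -/
import Mathlib

section
/- Let G be an abelian group and Λ ⊆ G a nonempty subset such that the indicator function 1_Λ : G → ℂ is a positive definite function. Then Λ is a subgroup of G. (Rigidity Lemma, combinatorial form.) -/
open scoped BigOperators ComplexOrder

/-- A function `f : G → ℂ` on an abelian group is positive definite. -/
def IsPosDefFn {G : Type*} [AddCommGroup G] (f : G → ℂ) : Prop :=
  ∀ (N : ℕ) (x : Fin N → G) (c : Fin N → ℂ),
    0 ≤ ∑ k, ∑ l, c k * (starRingEnd ℂ) (c l) * f (x k - x l)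

/-- Rigidity Lemma, combinatorial form. -/
theorem stmt4 {G : Type*} [AddCommGroup G] (Λ : Set G) (hne : Λ.Nonempty)
    (hpd : IsPosDefFn (Set.indicator Λ (fun _ => (1 : ℂ)))) :
    ∃ H : AddSubgroup G, (H : Set G) = Λ := by
  classical
  set f : G → ℂ := Set.indicator Λ (fun _ => (1 : ℂ)) with hf
  have hfval : ∀ x : G, f x = if x ∈ Λ then 1 else 0 := by
    intro x; simp [hf, Set.indicator_apply]
  -- symmetry : x ∈ Λ ↔ -x ∈ Λ
  have hsym : ∀ x : G, (-x ∈ Λ ↔ x ∈ Λ) := by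
    intro x
    have h := hpd 2 ![0, x] ![1, Complex.I]
    simp only [Fin.sum_univ_two, Matrix.cons_val_zero, Matrix.cons_val_one, Matrix.head_cons,
      map_one, Complex.conj_I, one_mul, mul_one, sub_self, zero_sub, sub_zero] at h
    constructor <;> intro hx <;> by_contra hx'
    · rw [hfval, hfval, hfval] at h
      simp only [hx, hx', if_true, if_false, mul_zero] at h
      rcases Complex.le_def.mp h with ⟨-, him⟩
      by_cases h0 : (0:G) ∈ Λ <;> simp [h0, Complex.ext_iff] at him
    · rw [hfval, hfval, hfval] at h
      simp only [hx, hx', if_true, if_false, mul_zero] at h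
      rcases Complex.le_def.mp h with ⟨-, him⟩
      by_cases h0 : (0:G) ∈ Λ <;> simp [h0, Complex.ext_iff] at him
  -- zero mem
  obtain ⟨a0, ha0⟩ := hne
  have hzero : (0 : G) ∈ Λ := by
    by_contra h0
    have h := hpd 2 ![a0, 0] ![1, -1]
    simp only [Fin.sum_univ_two, Matrix.cons_val_zero, Matrix.cons_val_one, Matrix.head_cons,
      map_one, map_neg, one_mul, mul_one, mul_neg, neg_mul, neg_neg, sub_self, zero_sub,
      sub_zero] at h
    rw [hfval, hfval, hfval] at h
    have hna0 : -a0 ∈ Λ := (hsym a0).mpr ha0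
    simp only [h0, ha0, hna0, if_true, if_false] at h
    rcases Complex.le_def.mp h with ⟨hre, -⟩
    norm_num at hre
  -- closure under subtraction
  have hdiff : ∀ a b : G, a ∈ Λ → b ∈ Λ → a - b ∈ Λ := by
    intro a b ha hb
    by_contra hab
    have hba : ¬ (b - a ∈ Λ) := by
      intro h'
      exact hab (by simpa [neg_sub] using (hsym (b - a)).mpr h')
    have h := hpd 3 ![a, b, 0] ![1, 1, -1]
    simp only [Fin.sum_univ_three, Matrix.cons_val_zero, Matrix.cons_val_one, Matrix.head_cons,
      Matrix.cons_val_two, Matrix.tail_cons, map_one, map_neg, one_mul, mul_one, mul_neg,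
      neg_mul, neg_neg, sub_self, zero_sub, sub_zero] at h
    simp only [hfval] at h
    have hna : -a ∈ Λ := (hsym a).mpr ha
    have hnb : -b ∈ Λ := (hsym b).mpr hb
    simp only [ha, hb, hna, hnb, hzero, hab, hba, if_true, if_false] at h
    rcases Complex.le_def.mp h with ⟨hre, -⟩
    norm_num at hre
  refine ⟨{ carrier := Λ
            zero_mem' := hzero
            add_mem' := ?_
            neg_mem' := ?_ }, rfl⟩
  · intro a b ha hb
    have : a - (-b) ∈ Λ := hdiff a (-b) ha ((hsym b).mpr hb)
    simpa [sub_neg_eq_add] using this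
  · intro a ha
    exact (hsym a).mpr ha
end

section
/- Let G be an abelian group, f : G → ℝ a positive definite function (viewed as complex-valued) that is also nonnegative: f(x) ≥ 0 for all x. Let a > (√3 − 1)·f(0), and let I := {x ∈ G : f(x) ≥ a}. Then for all x, y ∈ I, f(x − y) ≥ a − √(2 f(0)(f(0) − a)) > 0. (Key step of the Sparseness Lemma.) -/
open scoped BigOperators ComplexOrder

/-- A real-valued function on an abelian group is positive definite
(viewed as complex-valued). -/
def IsPosDefFnR {G : Type*} [AddCommGroup G] (f : G → ℝ) : Prop :=
  ∀ (N : ℕ) (x : Fin N → G) (c : Fin N → ℂ),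
    0 ≤ ∑ k, ∑ l, c k * (starRingEnd ℂ) (c l) * (f (x k - x l) : ℂ)

lemma pd_symm {G : Type*} [AddCommGroup G] (f : G → ℝ) (hpd : IsPosDefFnR f)
    (x : G) : f (-x) = f x := by
  have h := hpd 2 ![x, 0] ![Complex.I, 1]
  rw [Complex.le_def] at h
  have h2 := h.2
  simp [Fin.sum_univ_two, Complex.ext_iff, Complex.add_im, Complex.mul_im] at h2
  linarith

lemma pd_key {G : Type*} [AddCommGroup G] (f : G → ℝ) (hpd : IsPosDefFnR f)
    (u v : G) : (f u - f v)^2 ≤ 2 * f 0 * (f 0 - f (u - v)) := by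
  have hq : ∀ t : ℝ, 0 ≤ f 0 * t ^ 2 + (2 * (f u - f v)) * t
      + (2 * f 0 - 2 * f (u - v)) := by
    intro t
    have h := hpd 3 ![0, u, v] ![(t : ℂ), 1, -1]
    rw [Complex.le_def] at h
    have h1 := h.1
    simp only [Fin.sum_univ_three, Matrix.cons_val_zero, Matrix.cons_val_one,
      Matrix.head_cons, Matrix.cons_val_two, Matrix.tail_cons, sub_zero, zero_sub,
      sub_self, map_one, map_neg, Complex.conj_ofReal] at h1
    rw [pd_symm f hpd u, pd_symm f hpd v, show v - u = -(u - v) by abel,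
      pd_symm f hpd (u - v)] at h1
    simp [Complex.add_re, Complex.mul_re, Complex.neg_re, Complex.one_re,
      Complex.ofReal_re, Complex.ofReal_im] at h1
    nlinarith [h1]
  have hd := discrim_le_zero (a := f 0) (b := 2 * (f u - f v))
    (c := 2 * f 0 - 2 * f (u - v)) (fun t => by nlinarith [hq t])
  rw [discrim] at hd
  nlinarith [hd]

/-- Key step of the Sparseness Lemma. -/
theorem stmt5 {G : Type*} [AddCommGroup G] (f : G → ℝ) (hpd : IsPosDefFnR f)
    (hnn : ∀ x, 0 ≤ f x) (a : ℝ) (ha : a > (Real.sqrt 3 - 1) * f 0) :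
    ∀ x ∈ {x : G | f x ≥ a}, ∀ y ∈ {x : G | f x ≥ a},
      f (x - y) ≥ a - Real.sqrt (2 * f 0 * (f 0 - a)) ∧
      0 < a - Real.sqrt (2 * f 0 * (f 0 - a)) := by
  intro x hx y hy
  have hf0 : 0 ≤ f 0 := hnn 0
  have hs3 : 1 < Real.sqrt 3 := by
    rw [show (1:ℝ) = Real.sqrt 1 by simp]
    exact Real.sqrt_lt_sqrt (by norm_num) (by norm_num)
  have ha0 : 0 < a := lt_of_le_of_lt (by nlinarith) ha
  have hpos : 0 < a - Real.sqrt (2 * f 0 * (f 0 - a)) := by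
    have : Real.sqrt (2 * f 0 * (f 0 - a)) < a := by
      rw [Real.sqrt_lt' ha0]
      have h3 : Real.sqrt 3 * Real.sqrt 3 = 3 := Real.mul_self_sqrt (by norm_num)
      have h3f : Real.sqrt 3 * Real.sqrt 3 * (f 0 * f 0) = 3 * (f 0 * f 0) := by rw [h3]
      have hprod : 0 < (a - (Real.sqrt 3 - 1) * f 0) * (a + (Real.sqrt 3 + 1) * f 0) :=
        mul_pos (sub_pos.2 ha) (by positivity)
      nlinarith [hprod, h3f, hf0]
    linarith
  refine ⟨?_, hpos⟩
  have hkey := pd_key f hpd (x - y) (-y)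
  rw [pd_symm f hpd y, show (x - y) - (-y) = x by abel] at hkey
  have hxa : a ≤ f x := hx
  have hb : (f (x - y) - f y)^2 ≤ 2 * f 0 * (f 0 - a) := by
    nlinarith [mul_nonneg hf0 (sub_nonneg.2 hxa)]
  have habs : f y - f (x - y) ≤ Real.sqrt (2 * f 0 * (f 0 - a)) := by
    have := Real.sqrt_le_sqrt hb
    rw [Real.sqrt_sq_eq_abs] at this
    calc f y - f (x - y) ≤ |f (x - y) - f y| := by rw [abs_sub_comm]; exact le_abs_self _
    _ ≤ _ := this
  have : a ≤ f y := hy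
  linarith
end

section
/- Let G be an abelian group and Λ ⊆ G a subset such that for every finitely supported function c : G → ℂ one has ∑_{x,y ∈ supp c} c(x) conj(c(y)) · 1_Λ(x − y) ≥ 0 (i.e., the Dirac comb δ_Λ is positive definite as a measure on G with discrete topology). If Λ is nonempty, then Λ − Λ ⊆ Λ and Λ is a subgroup of G. -/
open scoped BigOperators ComplexOrder

/-- Rigidity for positive definite Dirac combs. -/
theorem stmt10 {G : Type*} [AddCommGroup G] (Λ : Set G)
    (hpd : ∀ c : G →₀ ℂ,
      0 ≤ ∑ x ∈ c.support, ∑ y ∈ c.support,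
        c x * (starRingEnd ℂ) (c y) * Set.indicator Λ (fun _ => (1 : ℂ)) (x - y))
    (hne : Λ.Nonempty) :
    (∀ x ∈ Λ, ∀ y ∈ Λ, x - y ∈ Λ) ∧ ∃ H : AddSubgroup G, (H : Set G) = Λ := by
  classical
  set f : G → ℂ := Set.indicator Λ (fun _ => (1 : ℂ)) with hf
  -- extension of hpd to arbitrary finsets and functions
  have key : ∀ (s : Finset G) (c : G → ℂ), (∀ x, c x ≠ 0 → x ∈ s) →
      0 ≤ ∑ x ∈ s, ∑ y ∈ s, c x * (starRingEnd ℂ) (c y) * f (x - y) := by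
    intro s c hc
    set d : G →₀ ℂ := Finsupp.onFinset s c hc with hd
    have hsupp : d.support ⊆ s := Finsupp.support_onFinset_subset
    have hdc : ∀ x, d x = c x := fun x => rfl
    have h := hpd d
    have h2 : ∀ x : G, ∑ y ∈ d.support, c x * (starRingEnd ℂ) (c y) * f (x - y)
        = ∑ y ∈ s, c x * (starRingEnd ℂ) (c y) * f (x - y) :=
      fun x => Finset.sum_subset hsupp (fun y _ hy => by
        have : c y = 0 := by rw [← hdc]; exact Finsupp.notMem_support_iff.mp hy
        simp [this])
    have h3 : ∑ x ∈ d.support, ∑ y ∈ d.support, c x * (starRingEnd ℂ) (c y) * f (x - y)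
        = ∑ x ∈ s, ∑ y ∈ s, c x * (starRingEnd ℂ) (c y) * f (x - y) := by
      rw [Finset.sum_subset hsupp (fun x _ hx => by
        have : c x = 0 := by rw [← hdc]; exact Finsupp.notMem_support_iff.mp hx
        simp [this])]
      exact Finset.sum_congr rfl (fun x _ => h2 x)
    simpa only [hdc, h3] using h
  -- Step A: 0 ∈ Λ
  have h0 : (0 : G) ∈ Λ := by
    by_contra h0
    obtain ⟨a, ha⟩ := hne
    have ha0 : a ≠ 0 := fun h => h0 (h ▸ ha)
    set c : G → ℂ := fun z => if z = 0 then 1 else if z = a then -1 else 0 with hcdef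
    have hmem : ∀ x, c x ≠ 0 → x ∈ ({0, a} : Finset G) := by
      intro x hx
      by_cases h1 : x = 0
      · simp [h1]
      · by_cases h2 : x = a
        · simp [h2]
        · exact absurd (by simp [hcdef, h1, h2]) hx
    have H := key {0, a} c hmem
    rw [Finset.sum_pair ha0.symm] at H
    rw [Finset.sum_pair ha0.symm, Finset.sum_pair ha0.symm] at H
    have hc0 : c 0 = 1 := by simp [hcdef]
    have hca : c a = -1 := by simp [hcdef, ha0]
    rw [hc0, hca] at H
    simp only [zero_sub, sub_zero, sub_self, map_one, map_neg, mul_one, one_mul,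
      mul_neg, neg_mul, neg_neg] at H
    have hf0 : f 0 = 0 := Set.indicator_of_notMem h0 _
    have hfa : f a = 1 := Set.indicator_of_mem ha _
    rw [hf0, hfa] at H
    by_cases hna : -a ∈ Λ
    · have hfna : f (-a) = 1 := Set.indicator_of_mem hna _
      rw [hfna, Complex.le_def] at H
      norm_num at H
    · have hfna : f (-a) = 0 := Set.indicator_of_notMem hna _
      rw [hfna, Complex.le_def] at H
      norm_num at H
  -- Step B: Λ is symmetric
  have hneg : ∀ y ∈ Λ, -y ∈ Λ := by
    intro y hy
    by_contra hny
    have hy0 : y ≠ 0 := by rintro rfl; exact hny (by simpa using h0)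
    set c : G → ℂ := fun z => if z = 0 then 1 else if z = y then Complex.I else 0 with hcdef
    have hmem : ∀ x, c x ≠ 0 → x ∈ ({0, y} : Finset G) := by
      intro x hx
      by_cases h1 : x = 0
      · simp [h1]
      · by_cases h2 : x = y
        · simp [h2]
        · exact absurd (by simp [hcdef, h1, h2]) hx
    have H := key {0, y} c hmem
    rw [Finset.sum_pair hy0.symm, Finset.sum_pair hy0.symm, Finset.sum_pair hy0.symm] at H
    have hc0 : c 0 = 1 := by simp [hcdef]
    have hcy : c y = Complex.I := by simp [hcdef, hy0]
    rw [hc0, hcy] at H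
    have hf0 : f 0 = 1 := Set.indicator_of_mem h0 _
    have hfy : f y = 1 := Set.indicator_of_mem hy _
    have hfny : f (-y) = 0 := Set.indicator_of_notMem hny _
    simp only [zero_sub, sub_zero, sub_self, neg_zero, hf0, hfy, hfny] at H
    rw [Complex.le_def] at H
    simp [Complex.conj_I, Complex.ext_iff] at H
  -- Step C: closed under subtraction
  have hdiff : ∀ x ∈ Λ, ∀ y ∈ Λ, x - y ∈ Λ := by
    intro x hx y hy
    rcases eq_or_ne x y with rfl | hxy
    · simpa using h0
    rcases eq_or_ne x 0 with rfl | hx0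
    · simpa using hneg y hy
    rcases eq_or_ne y 0 with rfl | hy0
    · simpa using hx
    by_contra hxmy
    have hymx : y - x ∉ Λ := fun h => hxmy (by simpa [neg_sub] using hneg _ h)
    set c : G → ℂ := fun z => if z = 0 then -1 else if z = x then 1 else if z = y then 1 else 0
      with hcdef
    have hmem : ∀ z, c z ≠ 0 → z ∈ ({0, x, y} : Finset G) := by
      intro z hz
      by_cases h1 : z = 0
      · simp [h1]
      · by_cases h2 : z = x
        · simp [h2]
        · by_cases h3 : z = y
          · simp [h3]
          · exact absurd (by simp [hcdef, h1, h2, h3]) hz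
    have H := key {0, x, y} c hmem
    have h1 : (0 : G) ∉ ({x, y} : Finset G) := by simp [Ne.symm hx0, Ne.symm hy0]
    have h2 : x ∉ ({y} : Finset G) := by simp [hxy]
    have hset : ({0, x, y} : Finset G) = insert 0 (insert x {y}) := rfl
    rw [hset] at H
    simp only [Finset.sum_insert h1, Finset.sum_insert h2, Finset.sum_singleton] at H
    have hc0 : c 0 = -1 := by simp [hcdef]
    have hcx : c x = 1 := by simp [hcdef, hx0]
    have hcy : c y = 1 := by simp [hcdef, hy0, Ne.symm hxy]
    rw [hc0, hcx, hcy] at H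
    have hf0 : f 0 = 1 := Set.indicator_of_mem h0 _
    have hfx : f x = 1 := Set.indicator_of_mem hx _
    have hfy : f y = 1 := Set.indicator_of_mem hy _
    have hfnx : f (-x) = 1 := Set.indicator_of_mem (hneg x hx) _
    have hfny : f (-y) = 1 := Set.indicator_of_mem (hneg y hy) _
    have hfxy : f (x - y) = 0 := Set.indicator_of_notMem hxmy _
    have hfyx : f (y - x) = 0 := Set.indicator_of_notMem hymx _
    simp only [zero_sub, sub_zero, sub_self, neg_zero, hf0, hfx, hfy, hfnx, hfny,
      hfxy, hfyx] at H
    rw [Complex.le_def] at H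
    norm_num at H
  refine ⟨hdiff, ⟨AddSubgroup.mk (AddSubmonoid.mk (AddSubsemigroup.mk Λ ?_) h0) ?_, rfl⟩⟩
  · intro a b ha hb
    have := hdiff a ha (-b) (hneg b hb)
    simpa [sub_neg_eq_add] using this
  · intro a ha
    exact hneg a ha
end

section
/- Let Λ ⊆ ℝ^d be a Delone set (uniformly discrete and relatively dense) whose indicator function 1_Λ : ℝ^d → ℂ is a positive definite function on the group (ℝ^d, +). Then Λ is a lattice, i.e., a discrete cocompact subgroup of ℝ^d. -/
/-!
Testing positive definiteness of `1_Λ` on two or three points shows that `Λ` is symmetric,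
contains `0` and is closed under subtraction, so `Λ` is a subgroup. Uniform discreteness makes it
discrete, and relative density makes the closed ball of radius `R` surject onto `ℝ^d / Λ`, which
is therefore compact.
-/

open scoped BigOperators ComplexOrder

abbrev Euc (d : ℕ) := EuclideanSpace ℝ (Fin d)

@[simp]
theorem Complex.im_indicator_one {α : Type*} (s : Set α) (z : α) :
    (s.indicator (fun _ => (1 : ℂ)) z).im = 0 := by
  by_cases hz : z ∈ s <;> simp [hz]

section IndicatorPosDef

variable {G : Type*} [AddCommGroup G] {Λ : Set G}
  (hpd : IsPosDefFn (Λ.indicator fun _ => (1 : ℂ)))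
include hpd

theorem neg_mem_of_isPosDefFn_indicator {x : G} (hx : x ∈ Λ) : -x ∈ Λ := by
  by_contra hnx
  -- with weights `1, i` at `0, x` the form is `2 · 1_Λ(0) + i`, which is not real
  have H := hpd 2 ![0, x] ![1, Complex.I]
  simp [Fin.sum_univ_two, hx, hnx, Complex.le_def] at H

theorem zero_mem_of_isPosDefFn_indicator {x : G} (hx : x ∈ Λ) : (0 : G) ∈ Λ := by
  by_contra h0
  -- with weights `1, -1` at `0, x` the form is `-2`
  have H := hpd 2 ![0, x] ![1, -1]
  norm_num [Fin.sum_univ_two, hx, neg_mem_of_isPosDefFn_indicator hpd hx, h0, Complex.le_def] at H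

theorem sub_mem_of_isPosDefFn_indicator {x y : G} (hx : x ∈ Λ) (hy : y ∈ Λ) : x - y ∈ Λ := by
  by_contra hxy
  have hyx : y - x ∉ Λ := fun h => hxy (by simpa using neg_mem_of_isPosDefFn_indicator hpd h)
  -- with weights `-1, 1, 1` at `0, x, y` the form is `3 - 2 - 2 = -1`
  have H := hpd 3 ![0, x, y] ![-1, 1, 1]
  simp [Fin.sum_univ_three, hx, hy, hxy, hyx, neg_mem_of_isPosDefFn_indicator hpd hx,
    neg_mem_of_isPosDefFn_indicator hpd hy, zero_mem_of_isPosDefFn_indicator hpd hx,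
    Complex.le_def] at H
  norm_num at H

end IndicatorPosDef

theorem AddSubgroup.compactSpace_quotient_of_forall_exists_dist_le {E : Type*}
    [SeminormedAddCommGroup E] [ProperSpace E] (L : AddSubgroup E) {R : ℝ}
    (hL : ∀ x : E, ∃ y ∈ L, dist x y ≤ R) : CompactSpace (E ⧸ L) := by
  refine ⟨?_⟩
  have hball : (QuotientAddGroup.mk : E → E ⧸ L) '' Metric.closedBall (0 : E) R = Set.univ := by
    refine Set.eq_univ_of_forall fun q => ?_
    obtain ⟨x, rfl⟩ := QuotientAddGroup.mk_surjective q
    obtain ⟨y, hyL, hxy⟩ := hL x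
    refine ⟨x - y, by simpa [dist_eq_norm] using hxy, ?_⟩
    simpa [QuotientAddGroup.eq] using hyL
  exact hball ▸ (isCompact_closedBall 0 R).image QuotientAddGroup.continuous_mk

theorem stmt11 {d : ℕ} (Λ : Set (Euc d))
    (hud : ∃ r > (0 : ℝ), ∀ x ∈ Λ, ∀ y ∈ Λ, x ≠ y → r ≤ ‖x - y‖)
    (hrd : ∃ R > (0 : ℝ), ∀ x : Euc d, ∃ y ∈ Λ, dist x y ≤ R)
    (hpd : IsPosDefFn (Set.indicator Λ (fun _ => (1 : ℂ)))) :
    ∃ L : AddSubgroup (Euc d), (L : Set (Euc d)) = Λ ∧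
      DiscreteTopology L ∧ CompactSpace (Euc d ⧸ L) := by
  obtain ⟨r, hr, hsep⟩ := hud
  obtain ⟨R, -, hcov⟩ := hrd
  obtain ⟨y, hy, -⟩ := hcov 0
  let L := AddSubgroup.ofSub Λ ⟨y, hy⟩ fun _ hx _ hy => sub_mem_of_isPosDefFn_indicator hpd hx hy
  refine ⟨L, rfl, ?_, L.compactSpace_quotient_of_forall_exists_dist_le hcov⟩
  refine DiscreteTopology.of_forall_le_dist hr fun x y hxy => ?_
  simpa [dist_eq_norm] using hsep x x.2 y y.2 (Subtype.coe_injective.ne hxy)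
end

section
/- Let L be a subgroup of an abelian group G and η : L → ℂ a function. Extend η to G by zero. Then the extension is a positive definite function on G if and only if η is a positive definite function on L, provided η is extended so that it vanishes off L. More precisely: if η is positive definite on L, then its zero extension is positive definite on G; conversely, restriction of a positive definite function is positive definite. -/
open scoped BigOperators ComplexOrder Classical

private lemma posdef_finset {G : Type*} [AddCommGroup G] {f : G → ℂ} (hf : IsPosDefFn f)
    {ι : Type*} (s : Finset ι) (x : ι → G) (c : ι → ℂ) :
    0 ≤ ∑ k ∈ s, ∑ l ∈ s, c k * (starRingEnd ℂ) (c l) * f (x k - x l) := by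
  classical
  set e := s.equivFin
  have h0 := hf s.card (fun i => x (e.symm i)) (fun i => c (e.symm i))
  refine le_of_le_of_eq h0 ?_
  calc ∑ i, ∑ j, c (e.symm i) * (starRingEnd ℂ) (c (e.symm j)) * f (x (e.symm i) - x (e.symm j))
      = ∑ a : s, ∑ b : s, c a * (starRingEnd ℂ) (c b) * f (x a - x b) := by
        rw [← Equiv.sum_comp e.symm]
        exact Finset.sum_congr rfl fun a _ => by rw [← Equiv.sum_comp e.symm]
    _ = ∑ k ∈ s, ∑ l ∈ s, c k * (starRingEnd ℂ) (c l) * f (x k - x l) := by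
        rw [← Finset.sum_attach s (fun k => ∑ l ∈ s, c k * (starRingEnd ℂ) (c l) * f (x k - x l))]
        exact Finset.sum_congr rfl fun a _ =>
          Finset.sum_attach s (fun l => c a * (starRingEnd ℂ) (c l) * f (x ↑a - x l))

theorem stmt13 {G : Type*} [AddCommGroup G] (L : AddSubgroup G) (η : L → ℂ) :
    IsPosDefFn (fun x : G => if h : x ∈ L then η ⟨x, h⟩ else 0) ↔ IsPosDefFn η := by
  constructor
  · intro h N x c
    have h0 := h N (fun k => (x k : G)) c
    refine le_of_le_of_eq h0 ?_
    refine Finset.sum_congr rfl fun k _ => Finset.sum_congr rfl fun l _ => ?_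
    simp only [dif_pos (sub_mem (x k).2 (x l).2)]
    exact congrArg (c k * (starRingEnd ℂ) (c l) * ·) (congrArg η (Subtype.ext (by simp)))
  · intro h N x c
    set F : G → ℂ := fun x : G => if h : x ∈ L then η ⟨x, h⟩ else 0 with hF
    set f : Fin N → G ⧸ L := fun k => QuotientAddGroup.mk (x k) with hfdef
    have hfiff : ∀ k l, f k = f l ↔ x k - x l ∈ L := fun k l =>
      QuotientAddGroup.eq_iff_sub_mem
    have key := Finset.sum_fiberwise_of_maps_to
      (fun k (_ : k ∈ Finset.univ) => Finset.mem_image_of_mem f (Finset.mem_univ k))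
      (fun k => ∑ l, c k * (starRingEnd ℂ) (c l) * F (x k - x l))
    rw [← key]
    refine Finset.sum_nonneg fun q hq => ?_
    obtain ⟨k₀, _, hk₀⟩ := Finset.mem_image.mp hq
    set fib := Finset.univ.filter (fun k => f k = q) with hfib
    have hmem : ∀ k ∈ fib, x k - x k₀ ∈ L := by
      intro k hk
      have hfk : f k = q := (Finset.mem_filter.mp hk).2
      exact (hfiff k k₀).mp (hfk.trans hk₀.symm)
    set y : Fin N → L := fun k => if hk : x k - x k₀ ∈ L then ⟨x k - x k₀, hk⟩ else 0 with hy
    have hsum : ∀ k ∈ fib, ∑ l, c k * (starRingEnd ℂ) (c l) * F (x k - x l)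
        = ∑ l ∈ fib, c k * (starRingEnd ℂ) (c l) * F (x k - x l) := by
      intro k hk
      have hfk : f k = q := (Finset.mem_filter.mp hk).2
      refine (Finset.sum_filter_of_ne ?_).symm
      intro l _ hne
      have hxl : x k - x l ∈ L := by
        by_contra hc
        exact hne (by simp [hF, dif_neg hc])
      exact (hfiff k l).mpr hxl ▸ hfk
    rw [Finset.sum_congr rfl hsum]
    have h0 := posdef_finset h fib y c
    refine le_of_le_of_eq h0 ?_
    refine Finset.sum_congr rfl fun k hk => Finset.sum_congr rfl fun l hl => ?_
    have hk' := hmem k hk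
    have hl' := hmem l hl
    have hkl : x k - x l ∈ L := by
      have := sub_mem hk' hl'
      simpa using this
    rw [hF]
    simp only [dif_pos hkl]
    exact congrArg (c k * (starRingEnd ℂ) (c l) * ·) (congrArg η (Subtype.ext (by
      simp [hy, dif_pos hk', dif_pos hl']))).symm
end
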